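/- Let G be a group acting on a compact space X by homeomorphisms and K : G → C⁰(X;ℝ)/ℝ a one-cocycle with continuous values. Suppose g ∈ G has fixed points x and y with q(g) := K(g)(y) − K(g)(x) ≠ 0. Then q(gⁿ) = n·q(g) for all n ∈ ℤ, and g is undistorted in G: in every finitely generated subgroup of G containing g, the translation length of g is positive, using that h ↦ sup_{u,v ∈ X} |K(h)(v) − K(h)(u)| is a finite pseudo-norm on G. -/

import Mathlib

/-!
At common fixed points `x, y` of `g`, the cocycle identity makes `q(h) = K h y - K h x` additive
along `⟨g⟩`, whence `q(gⁿ) = n q(g)`. The oscillation `‖h‖ = diam (range (K h))` is a group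
seminorm (subadditive by the cocycle identity, finite by compactness), so it is bounded by the
word length times `∑_{s ∈ S} ‖s‖`. As `n |q(g)| = |q(gⁿ)| ≤ ‖gⁿ‖`, the word length of `gⁿ` grows
at least linearly in `n`.
-/

/-- The word norm of `g` with respect to a generating set `S`. -/
noncomputable def wordLength {G : Type*} [Group G] (S : Set G) (g : G) : ℕ :=
  sInf {k : ℕ | ∃ l : List G,
    l.length = k ∧ (∀ s ∈ l, s ∈ S ∨ s⁻¹ ∈ S) ∧ l.prod = g}

open Function Set

section WordLength

variable {G : Type*} [Group G]

theorem exists_list_length_eq_wordLength {S : Set G} {g : G} (hg : g ∈ Subgroup.closure S) :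
    ∃ l : List G, l.length = wordLength S g ∧ (∀ s ∈ l, s ∈ S ∨ s⁻¹ ∈ S) ∧ l.prod = g := by
  rw [← Subgroup.mem_toSubmonoid, Subgroup.closure_toSubmonoid] at hg
  obtain ⟨l, hl, rfl⟩ := Submonoid.exists_list_of_mem_closure hg
  exact Nat.sInf_mem
    (s := {k | ∃ l : List G, l.length = k ∧ (∀ s ∈ l, s ∈ S ∨ s⁻¹ ∈ S) ∧ l.prod = _})
    ⟨l.length, l, rfl, fun s hs => (hl s hs).imp id mem_inv.mp, rfl⟩

theorem GroupSeminorm.le_wordLength_mul (N : GroupSeminorm G) {S : Finset G} {g : G}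
    (hg : g ∈ Subgroup.closure (S : Set G)) :
    N g ≤ wordLength (S : Set G) g * ∑ s ∈ S, N s := by
  obtain ⟨l, hlen, hlS, rfl⟩ := exists_list_length_eq_wordLength hg
  have hgen : ∀ s ∈ l, N s ≤ ∑ t ∈ S, N t := by
    intro s hs
    rcases hlS s hs with hsS | hsinv
    · exact Finset.single_le_sum (fun t _ => apply_nonneg N t) hsS
    · exact map_inv_eq_map N s ▸ Finset.single_le_sum (fun t _ => apply_nonneg N t) hsinv
  calc N l.prod ≤ (l.map N).sum :=
        l.apply_prod_le_sum_map N (map_one_eq_zero N).le (map_mul_le_add N)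
    _ ≤ (l.map N).length • ∑ t ∈ S, N t := List.sum_le_card_nsmul _ _ (by simpa using hgen)
    _ = wordLength (S : Set G) l.prod * ∑ t ∈ S, N t := by simp [hlen]

theorem GroupSeminorm.pos_of_tendsto_wordLength_pow_div (N : GroupSeminorm G) {S : Finset G}
    {g : G} {a τ : ℝ} (ha : 0 < a) (hgrowth : ∀ n : ℕ, n * a ≤ N (g ^ n))
    (hg : g ∈ Subgroup.closure (S : Set G))
    (hτ : Filter.Tendsto (fun n : ℕ => (wordLength (S : Set G) (g ^ n) : ℝ) / n)
      Filter.atTop (nhds τ)) : 0 < τ := by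
  set M := ∑ s ∈ S, N s
  have hword : ∀ n : ℕ, n * a ≤ wordLength (S : Set G) (g ^ n) * M := fun n =>
    (hgrowth n).trans (N.le_wordLength_mul (pow_mem hg n))
  have hM : 0 < M := by
    by_contra! hM
    have h1 := hword 1
    rw [Nat.cast_one, one_mul, pow_one] at h1
    linarith [mul_nonpos_of_nonneg_of_nonpos (wordLength (S : Set G) g).cast_nonneg hM]
  refine (div_pos ha hM).trans_le (ge_of_tendsto hτ ?_)
  filter_upwards [Filter.eventually_gt_atTop 0] with n hn
  rw [div_le_div_iff₀ hM (by exact_mod_cast hn), mul_comm]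
  exact hword n

end WordLength

section Cocycle

variable {G X : Type*} [Group G]

/-- `K` is a one-cocycle for `ρ` with values in functions modulo constants: each `K g` is a
representative of its class in `C⁰(X;ℝ)/ℝ`, so the cocycle identity holds up to a constant. -/
def IsCocycleModConst (ρ : G → X → X) (K : G → X → ℝ) : Prop :=
  ∀ f g : G, ∃ c : ℝ, ∀ x : X, K (f * g) x = K f (ρ g x) + K g x + c

namespace IsCocycleModConst

variable {ρ : G → X → X} {K : G → X → ℝ}

theorem mul_apply_sub (hK : IsCocycleModConst ρ K) (f h : G) (u v : X) :
    K (f * h) u - K (f * h) v = (K f (ρ h u) - K f (ρ h v)) + (K h u - K h v) := by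
  obtain ⟨c, hc⟩ := hK f h
  rw [hc u, hc v]
  ring

/-- The cocycle identity at `(1, 1)` says that `K 1 ∘ ρ 1` is constant. -/
theorem apply_one_eq (hK : IsCocycleModConst ρ K) (hρ : Surjective (ρ 1)) (u v : X) :
    K 1 u = K 1 v := by
  obtain ⟨u, rfl⟩ := hρ u
  obtain ⟨v, rfl⟩ := hρ v
  have h1 := hK.mul_apply_sub 1 1 u v
  rw [one_mul] at h1
  linarith

theorem inv_apply_sub (hK : IsCocycleModConst ρ K) (hρ : Surjective (ρ 1)) (h : G) (u v : X) :
    K h⁻¹ (ρ h u) - K h⁻¹ (ρ h v) = -(K h u - K h v) := by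
  have h1 := hK.mul_apply_sub h⁻¹ h u v
  rw [inv_mul_cancel, hK.apply_one_eq hρ u v, sub_self] at h1
  linarith

theorem mul_sub_of_isFixedPt (hK : IsCocycleModConst ρ K) (f : G) {h : G} {x y : X}
    (hx : IsFixedPt (ρ h) x) (hy : IsFixedPt (ρ h) y) :
    K (f * h) y - K (f * h) x = (K f y - K f x) + (K h y - K h x) := by
  rw [hK.mul_apply_sub, hx.eq, hy.eq]

theorem zpow_sub_of_isFixedPt (hK : IsCocycleModConst ρ K) (hρ : Surjective (ρ 1)) {g : G}
    {x y : X} (hx : IsFixedPt (ρ g) x) (hy : IsFixedPt (ρ g) y) (n : ℤ) :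
    K (g ^ n) y - K (g ^ n) x = n * (K g y - K g x) := by
  induction n with
  | zero => simp [hK.apply_one_eq hρ y x]
  | succ n ih =>
    rw [zpow_add_one, hK.mul_sub_of_isFixedPt _ hx hy, ih]
    push_cast
    ring
  | pred n ih =>
    have h1 := hK.mul_sub_of_isFixedPt (g ^ (-(n : ℤ) - 1)) hx hy
    rw [← zpow_add_one, sub_add_cancel, ih] at h1
    push_cast at h1 ⊢
    linarith

variable [TopologicalSpace X] [CompactSpace X]

/-- The pseudo-norm `h ↦ sup_{u,v} |K h v - K h u|` of the paper, written as a diameter. -/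
noncomputable def diamSeminorm (hK : IsCocycleModConst ρ K) (hρ : ∀ g, Surjective (ρ g))
    (hKc : ∀ g, Continuous (K g)) : GroupSeminorm G where
  toFun h := Metric.diam (range (K h))
  map_one' := Metric.diam_subsingleton <| by
    rintro _ ⟨u, rfl⟩ _ ⟨v, rfl⟩
    exact hK.apply_one_eq (hρ 1) u v
  mul_le' f h := Metric.diam_le_of_forall_dist_le (by positivity) <| by
    rintro _ ⟨u, rfl⟩ _ ⟨v, rfl⟩
    rw [Real.dist_eq, hK.mul_apply_sub]
    refine (abs_add_le _ _).trans (add_le_add ?_ ?_) <;>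
      exact Metric.dist_le_diam_of_mem (isCompact_range (hKc _)).isBounded
        (mem_range_self _) (mem_range_self _)
  inv' := by
    suffices hle : ∀ h, Metric.diam (range (K h⁻¹)) ≤ Metric.diam (range (K h)) from
      fun h => (hle h).antisymm (by simpa using hle h⁻¹)
    intro h
    refine Metric.diam_le_of_forall_dist_le Metric.diam_nonneg ?_
    rintro _ ⟨u, rfl⟩ _ ⟨v, rfl⟩
    obtain ⟨u, rfl⟩ := hρ h u
    obtain ⟨v, rfl⟩ := hρ h v
    rw [Real.dist_eq, hK.inv_apply_sub (hρ 1), abs_neg]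
    exact Metric.dist_le_diam_of_mem (isCompact_range (hKc h)).isBounded
      (mem_range_self _) (mem_range_self _)

theorem abs_sub_le_diamSeminorm (hK : IsCocycleModConst ρ K) (hρ : ∀ g, Surjective (ρ g))
    (hKc : ∀ g, Continuous (K g)) (h : G) (u v : X) :
    |K h u - K h v| ≤ hK.diamSeminorm hρ hKc h :=
  Metric.dist_le_diam_of_mem (isCompact_range (hKc h)).isBounded
    (mem_range_self u) (mem_range_self v)

end IsCocycleModConst

end Cocycle

theorem undistorted_of_two_fixed_points_general
    {G X : Type*} [Group G] [TopologicalSpace X] [CompactSpace X]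
    (ρ : G → X ≃ₜ X)
    (K : G → C(X, ℝ))
    (hK : ∀ f g : G, ∃ c : ℝ, ∀ x : X, K (f * g) x = K f (ρ g x) + K g x + c)
    (g : G) (x y : X) (hx : ρ g x = x) (hy : ρ g y = y)
    (hq : K g y - K g x ≠ 0) :
    (∀ n : ℤ, K (g ^ n) y - K (g ^ n) x = n * (K g y - K g x)) ∧
    (∀ S : Finset G, g ∈ Subgroup.closure (S : Set G) →
      ∀ τ : ℝ,
        Filter.Tendsto (fun n : ℕ => (wordLength (S : Set G) (g ^ n) : ℝ) / n)
          Filter.atTop (nhds τ) → 0 < τ) := by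
  have hcocycle : IsCocycleModConst (fun h => ρ h) (fun h => K h) := hK
  have hsurj : ∀ h : G, Surjective (ρ h) := fun h => (ρ h).surjective
  have hzpow := hcocycle.zpow_sub_of_isFixedPt (hsurj 1) hx hy
  refine ⟨hzpow, fun S hgS τ hτ => ?_⟩
  let N := hcocycle.diamSeminorm hsurj fun h => (K h).continuous
  refine N.pos_of_tendsto_wordLength_pow_div (abs_pos.2 hq) (fun n => ?_) hgS hτ
  calc (n : ℝ) * |K g y - K g x| = |K (g ^ n) y - K (g ^ n) x| := by
        rw [← zpow_natCast, hzpow, abs_mul, Int.cast_natCast, Nat.abs_cast]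
    _ ≤ N (g ^ n) := hcocycle.abs_sub_le_diamSeminorm hsurj _ _ _ _

/-- Let `G` act on a compact space `X` by homeomorphisms and let
`K : G → C⁰(X;ℝ)/ℝ` be a one-cocycle with continuous values.  Suppose
`g ∈ G` has fixed points `x, y` with `q(g) := K(g)(y) − K(g)(x) ≠ 0`.
Then `q(gⁿ) = n·q(g)` for all `n ∈ ℤ`, and `g` is undistorted in `G`:
in every finitely generated subgroup of `G` containing `g` the translation
length of `g` is positive. -/
theorem undistorted_of_two_fixed_points
    {G X : Type*} [Group G] [TopologicalSpace X] [CompactSpace X]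
    (ρ : G → X ≃ₜ X)
    (hρone : ρ 1 = Homeomorph.refl X)
    (hρmul : ∀ f g : G, ∀ x : X, ρ (f * g) x = ρ f (ρ g x))
    (K : G → C(X, ℝ))
    (hK : ∀ f g : G, ∃ c : ℝ, ∀ x : X, K (f * g) x = K f (ρ g x) + K g x + c)
    (g : G) (x y : X) (hx : ρ g x = x) (hy : ρ g y = y)
    (hq : K g y - K g x ≠ 0) :
    (∀ n : ℤ, K (g ^ n) y - K (g ^ n) x = n * (K g y - K g x)) ∧
    (∀ S : Finset G, g ∈ Subgroup.closure (S : Set G) →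
      ∀ τ : ℝ,
        Filter.Tendsto (fun n : ℕ => (wordLength (S : Set G) (g ^ n) : ℝ) / n)
          Filter.atTop (nhds τ) → 0 < τ) :=
  undistorted_of_two_fixed_points_general ρ K hK g x y hx hy hq
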